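/- Let G be a game graph with weight function w and let c ∈ ℕ. For every node v: if v ∈ V0 then v ∈ Win(G, En_c(w)) if and only if there exists an edge e ∈ E(v) with optE(e) ≤ c; and if v ∈ V1 then v ∈ Win(G, En_c(w)) if and only if every edge e ∈ E(v) satisfies optE(e) ≤ c. -/
import Mathlib


open scoped Classical

noncomputable section

namespace QaSTelPaper

variable {V : Type*}

/-- Prefix weight `w(ρ[0;i])` of a play. -/
def prefW (w : V × V → ℤ) (ρ : ℕ → V) (i : ℕ) : ℤ :=
  ∑ j ∈ Finset.range i, w (ρ j, ρ (j + 1))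

/-- A play on the edge set `E`. -/
def IsPlay (E : Set (V × V)) (ρ : ℕ → V) : Prop :=
  ∀ i, (ρ i, ρ (i + 1)) ∈ E

/-- A Player-0 strategy assigns to each history and current Player-0 node a successor
that forms an edge. -/
def IsStrategy (V0 : Set V) (E : Set (V × V)) (π : List V → V → V) : Prop :=
  ∀ H v, v ∈ V0 → (v, π H v) ∈ E

/-- History of the play `ρ` strictly before index `i`. -/
def hist (ρ : ℕ → V) (i : ℕ) : List V :=
  List.ofFn fun j : Fin i => ρ j.1

/-- `ρ` is a `π`-play. -/
def FollowsStrat (V0 : Set V) (π : List V → V → V) (ρ : ℕ → V) : Prop :=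
  ∀ i, ρ i ∈ V0 → ρ (i + 1) = π (hist ρ i) (ρ i)

/-- The energy objective `En_c(w)`. -/
def En (w : V × V → ℤ) (c : ℕ) : Set (ℕ → V) :=
  {ρ | ∀ i, 0 ≤ (c : ℤ) + prefW w ρ i}

/-- The mean-payoff objective `MP(w)`. -/
def MP (w : V × V → ℤ) : Set (ℕ → V) :=
  {ρ | 0 ≤ Filter.limsup (fun n : ℕ => ((prefW w ρ n : ℝ) / (n : ℝ) : EReal)) Filter.atTop}

/-- `π` is winning from `v` for objective `φ`. -/
def WinningFrom (V0 : Set V) (E : Set (V × V)) (π : List V → V → V)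
    (φ : Set (ℕ → V)) (v : V) : Prop :=
  ∀ ρ, IsPlay E ρ → FollowsStrat V0 π ρ → ρ 0 = v → ρ ∈ φ

/-- The winning region of Player 0 for objective `φ`. -/
def Win (V0 : Set V) (E : Set (V × V)) (φ : Set (ℕ → V)) : Set V :=
  {v | ∃ π, IsStrategy V0 E π ∧ WinningFrom V0 E π φ v}

/-- A quantitative strategy template (QaSTel): monotone assignment of sets of activated
outgoing edges. -/
def IsQaSTel (E : Set (V × V)) (Temp : V → ℕ∞ → Set (V × V)) : Prop :=
  (∀ u c e, e ∈ Temp u c → e ∈ E ∧ e.1 = u) ∧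
  ∀ u c c', c ≤ c' → Temp u c ⊆ Temp u c'

/-- Activation value `act_Π(e)`: the least `k` such that `e ∈ Π(e.1, c)` for all `c ≥ k`. -/
def act (Temp : V → ℕ∞ → Set (V × V)) (e : V × V) : ℕ∞ :=
  sInf {k : ℕ∞ | ∀ c, k ≤ c → e ∈ Temp e.1 c}

/-- A QaSTel extended to integer credits: empty for negative credits. -/
def tmplZ (Temp : V → ℕ∞ → Set (V × V)) (u : V) (z : ℤ) : Set (V × V) :=
  if 0 ≤ z then Temp u (z.toNat : ℕ∞) else ∅

/-- `ρ` is a `(Π, c)`-play. -/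
def TemplatePlay (V0 : Set V) (w : V × V → ℤ) (Temp : V → ℕ∞ → Set (V × V))
    (c : ℕ) (ρ : ℕ → V) : Prop :=
  (∀ i, ρ i ∈ V0 → (ρ i, ρ (i + 1)) ∈ tmplZ Temp (ρ i) ((c : ℤ) + prefW w ρ i)) ∨
  ∃ k : ℕ,
    (∀ i ≤ k, ρ i ∈ V0 → (ρ i, ρ (i + 1)) ∈ tmplZ Temp (ρ i) ((c : ℤ) + prefW w ρ i)) ∧
    ρ (k + 1) ∈ V0 ∧ tmplZ Temp (ρ (k + 1)) ((c : ℤ) + prefW w ρ (k + 1)) = ∅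

/-- `π ⊨_c Π`: every `π`-play is a `(Π, c)`-play. -/
def FollowsTemplate (V0 : Set V) (E : Set (V × V)) (w : V × V → ℤ)
    (π : List V → V → V) (Temp : V → ℕ∞ → Set (V × V)) (c : ℕ) : Prop :=
  ∀ ρ, IsPlay E ρ → FollowsStrat V0 π ρ → TemplatePlay V0 w Temp c ρ

/-- Shift a play by one step. -/
def shift (ρ : ℕ → V) : ℕ → V := fun i => ρ (i + 1)

/-- The edge-optimal value `optE(e)`: the least `m` such that for every initial credit
`c ≥ m` there is a Player-0 strategy `π` with `plays_π(G,e) ⊆ En_c(w)`. -/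
def optE (V0 : Set V) (E : Set (V × V)) (w : V × V → ℤ) (e : V × V) : ℕ∞ :=
  sInf {m : ℕ∞ | ∀ c : ℕ, m ≤ (c : ℕ∞) →
    ∃ π, IsStrategy V0 E π ∧
      ∀ ρ, IsPlay E ρ → (ρ 0, ρ 1) = e → FollowsStrat V0 π (shift ρ) → ρ ∈ En w c}

/-- The node-optimal value `opt(v)`. -/
def optV (V0 : Set V) (E : Set (V × V)) (w : V × V → ℤ) (v : V) : ℕ∞ :=
  sInf {m : ℕ∞ | ∀ c : ℕ, m ≤ (c : ℕ∞) →
    ∃ π, IsStrategy V0 E π ∧ WinningFrom V0 E π (En w c) v}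

/-- Truncated subtraction `l ⊖ a` of an integer from an extended natural. -/
def osub (l : ℕ∞) (a : ℤ) : ℕ∞ :=
  if l = ⊤ then ⊤ else (((l.toNat : ℤ) - a).toNat : ℕ∞)

/-- The edge-based value-iteration operator `O_E`. -/
def OE (V0 : Set V) (E : Set (V × V)) (w : V × V → ℤ)
    (μ : V × V → ℕ∞) (e : V × V) : ℕ∞ :=
  if e.2 ∈ V0 then
    sInf {x : ℕ∞ | ∃ e' ∈ E, e'.1 = e.2 ∧ x = osub (μ e') (w e)}
  else
    sSup {x : ℕ∞ | ∃ e' ∈ E, e'.1 = e.2 ∧ x = osub (μ e') (w e)}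

/-- The optimal QaSTel `Temp(u,k) = {e ∈ E(u) : optE(e) ≤ k}`. -/
def optTmpl (V0 : Set V) (E : Set (V × V)) (w : V × V → ℤ) :
    V → ℕ∞ → Set (V × V) :=
  fun u k => {e | e ∈ E ∧ e.1 = u ∧ optE V0 E w e ≤ k}

/-- Canonical extension of the memory-update function to histories. -/
def updMem {M : Type*} (α : M × V → M) (m0 : M) (H : List V) : M :=
  H.foldl (fun m v => α (m, v)) m0

/-- The strategy induced by a finite-memory machine `(M, m0, α, β)`. -/
def memStrat {M : Type*} (α : M × V → M) (β : M × V → V) (m0 : M) :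
    List V → V → V :=
  fun H v => β (updMem α m0 H, v)

end QaSTelPaper

namespace QaSTelPaperAux

open QaSTelPaper

variable {V : Type*}

lemma hist_zero (ρ : ℕ → V) : hist ρ 0 = [] := by simp [hist]

lemma hist_succ (ρ : ℕ → V) (i : ℕ) :
    hist ρ (i + 1) = ρ 0 :: hist (shift ρ) i := by
  simp [hist, shift, List.ofFn_succ]

lemma En_mono (w : V × V → ℤ) {c c' : ℕ} (h : c ≤ c') : En w c ⊆ En w c' := by
  intro ρ hρ i
  have h1 := hρ i
  have h2 : (c : ℤ) ≤ (c' : ℤ) := by exact_mod_cast h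
  linarith

lemma strat_of_optE_le (V0 : Set V) (E : Set (V × V)) (w : V × V → ℤ)
    (e : V × V) (c : ℕ) (h : optE V0 E w e ≤ (c : ℕ∞)) :
    ∃ π, IsStrategy V0 E π ∧
      ∀ ρ, IsPlay E ρ → (ρ 0, ρ 1) = e → FollowsStrat V0 π (shift ρ) → ρ ∈ En w c := by
  have hlt : (c : ℕ∞) < ((c + 1 : ℕ) : ℕ∞) := by exact_mod_cast Nat.lt_succ_self c
  have h2 : optE V0 E w e < ((c + 1 : ℕ) : ℕ∞) := h.trans_lt hlt
  rw [optE, sInf_lt_iff] at h2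
  obtain ⟨m, hm, hmc⟩ := h2
  have hmt : m ≠ ⊤ := hmc.ne_top
  lift m to ℕ using hmt
  have hmn : m < c + 1 := by exact_mod_cast hmc
  exact hm c (by exact_mod_cast Nat.lt_succ_iff.mp hmn)

lemma optE_le_of_winning (V0 : Set V) (E : Set (V × V)) (w : V × V → ℤ)
    (c : ℕ) (v : V) (e : V × V) (π : List V → V → V)
    (hπ : IsStrategy V0 E π) (hwin : WinningFrom V0 E π (En w c) v)
    (he1 : e.1 = v) (he2 : v ∈ V0 → e.2 = π [] v) :
    optE V0 E w e ≤ (c : ℕ∞) := by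
  apply sInf_le
  intro c' hcc'
  have hcc : c ≤ c' := by exact_mod_cast hcc'
  refine ⟨fun H u => π (v :: H) u, fun H u hu => hπ _ u hu, ?_⟩
  intro ρ hplay hedge hfol
  have hρ0 : ρ 0 = v := by rw [← he1, ← hedge]
  have hfolπ : FollowsStrat V0 π ρ := by
    intro i hi
    cases i with
    | zero =>
        have h1 : ρ 1 = e.2 := by rw [← hedge]
        rw [h1, he2 (hρ0 ▸ hi), hist_zero, hρ0]
    | succ j =>
        have := hfol j (by simpa [shift] using hi)
        simpa [shift, hist_succ, hρ0] using this
  exact En_mono w hcc (hwin ρ hplay hfolπ hρ0)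

end QaSTelPaperAux

open QaSTelPaper QaSTelPaperAux in
/-- characterization of the winning region of the energy game with initial
credit `c` via `optE`, at Player-0 nodes (some outgoing edge has `optE ≤ c`) and at
Player-1 nodes (all outgoing edges have `optE ≤ c`). -/
theorem statement6 {V : Type*} [Fintype V]
    (V0 : Set V) (E : Set (V × V)) (hE : ∀ v : V, ∃ v', (v, v') ∈ E)
    (w : V × V → ℤ) (W : ℕ) (hw : ∀ e ∈ E, |w e| ≤ (W : ℤ)) (c : ℕ) :
    ∀ v : V,
      (v ∈ V0 →
        (v ∈ Win V0 E (En w c) ↔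
          ∃ e ∈ E, e.1 = v ∧ optE V0 E w e ≤ (c : ℕ∞))) ∧
      (v ∉ V0 →
        (v ∈ Win V0 E (En w c) ↔
          ∀ e ∈ E, e.1 = v → optE V0 E w e ≤ (c : ℕ∞))) := by
  intro v
  constructor
  · -- Player-0 node
    intro hv
    constructor
    · rintro ⟨π, hπ, hwin⟩
      refine ⟨(v, π [] v), hπ [] v hv, rfl, ?_⟩
      exact optE_le_of_winning V0 E w c v _ π hπ hwin rfl (fun _ => rfl)
    · rintro ⟨e, heE, he1, hle⟩
      obtain ⟨π, hπ, hπwin⟩ := strat_of_optE_le V0 E w e c hle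
      refine ⟨fun H u => match H with
        | [] => if u = v then e.2 else Classical.choose (hE u)
        | _ :: H' => π H' u, ?_, ?_⟩
      · intro H u hu
        cases H with
        | nil =>
            by_cases h : u = v
            · simpa [h, ← he1] using heE
            · simpa [h] using Classical.choose_spec (hE u)
        | cons a H' => exact hπ H' u hu
      · intro ρ hplay hfol hρ0
        have h1 : ρ 1 = e.2 := by
          have := hfol 0 (hρ0 ▸ hv)
          rw [this, hist_zero, hρ0]
          simp
        have hedge : (ρ 0, ρ 1) = e := by rw [hρ0, h1, ← he1]
        have hsh : FollowsStrat V0 π (shift ρ) := by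
          intro i hi
          have := hfol (i + 1) (by simpa [shift] using hi)
          simpa [shift, hist_succ] using this
        exact hπwin ρ hplay hedge hsh
  · -- Player-1 node
    intro hv
    constructor
    · rintro ⟨π, hπ, hwin⟩ e heE he1
      refine optE_le_of_winning V0 E w c v e π hπ hwin he1 (fun h => ?_)
      exact absurd h hv
    · intro hall
      have key : ∀ e : V × V, ∃ π, IsStrategy V0 E π ∧
          (e ∈ E → e.1 = v → ∀ ρ, IsPlay E ρ → (ρ 0, ρ 1) = e →
            FollowsStrat V0 π (shift ρ) → ρ ∈ En w c) := by
        intro e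
        by_cases hcase : e ∈ E ∧ e.1 = v
        · obtain ⟨π, h1, h2⟩ := strat_of_optE_le V0 E w e c (hall e hcase.1 hcase.2)
          exact ⟨π, h1, fun _ _ => h2⟩
        · exact ⟨fun _ u => Classical.choose (hE u),
            fun H u _ => Classical.choose_spec (hE u),
            fun hE' h1 => absurd ⟨hE', h1⟩ hcase⟩
      choose PS hPSs hPSw using key
      refine ⟨fun H u => match H with
        | [] => Classical.choose (hE u)
        | a :: H' => PS (a, H'.headD u) H' u, ?_, ?_⟩
      · intro H u hu
        cases H with
        | nil => exact Classical.choose_spec (hE u)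
        | cons a H' => exact hPSs (a, H'.headD u) H' u hu
      · intro ρ hplay hfol hρ0
        set e : V × V := (ρ 0, ρ 1) with he
        have heE : e ∈ E := hplay 0
        have hsh : FollowsStrat V0 (PS e) (shift ρ) := by
          intro i hi
          have hstep := hfol (i + 1) (by simpa [shift] using hi)
          have hhead : (hist (shift ρ) i).headD (ρ (i + 1)) = ρ 1 := by
            cases i with
            | zero => simp [hist_zero]
            | succ k => simp [hist_succ, shift]
          rw [hist_succ] at hstep
          show ρ (i + 1 + 1) = PS e (hist (shift ρ) i) (shift ρ i)
          rw [hstep]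
          simp only [shift]
          rw [hhead, hρ0]
          simp only [he, hρ0]
        exact hPSw e heE (by rw [he, hρ0]) ρ hplay rfl hsh
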